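/- Let m ≥ 1 and let Φ : ℝᵐ × ℝᵐ → ℝᵐ × ℝᵐ be a C² map of the fibered form Φ(κ, λ) = (A(κ, λ), B(λ)) (the base component B depends only on λ). Suppose Φ is a symplectomorphism for the standard symplectic form ω₀ on ℝᵐ × ℝᵐ, ω₀((a,b),(c,d)) = ⟨a,d⟩ − ⟨b,c⟩, in the sense that at every point p and for all vectors u, v ∈ ℝᵐ × ℝᵐ one has ω₀(DΦ(p)u, DΦ(p)v) = ω₀(u,v). Suppose moreover Φ is odd (ℤ₂-equivariant) in the fibers: A(−κ, λ) = −A(κ, λ) for all (κ, λ). Then for all κ, λ ∈ ℝᵐ and all w ∈ ℝᵐ: ⟨A(κ, λ), DB(λ)w⟩ = ⟨κ, w⟩; that is, A(κ, λ) = ((DB(λ))ᵀ)⁻¹ κ, so Φ is exactly the cotangent lift of the base diffeomorphism (with no translation by a differential dG). -/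

import Mathlib

open scoped BigOperators

/-- The canonical symplectic form on `ℝᵐ × ℝᵐ` (coordinates `(κ, λ)`, `κ` the fiber
coordinates): `ω₀((a,b),(c,d)) = ⟨a,d⟩ − ⟨b,c⟩`. -/
noncomputable def symp (m : ℕ) (a b : (Fin m → ℝ) × (Fin m → ℝ)) : ℝ :=
  (∑ i, a.1 i * b.2 i) - (∑ i, a.2 i * b.1 i)

/-!
Pairing the symplectic condition with a vertical vector `(κ', 0)` and a horizontal one `(0, w)`
shows that, on each fibre, the derivative of `κ ↦ ⟨A(κ, λ), DB(λ) w⟩` is the constant functional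
`κ' ↦ ⟨κ', w⟩`. Hence `⟨A(κ, λ), DB(λ) w⟩ = ⟨A(0, λ), DB(λ) w⟩ + ⟨κ, w⟩`, and oddness forces
`A(0, λ) = 0`.
-/

open ContinuousLinearMap

theorem eq_add_of_forall_hasFDerivAt {E F : Type*} [NormedAddCommGroup E] [NormedSpace ℝ E]
    [NormedAddCommGroup F] [NormedSpace ℝ F] {f : E → F} {L : E →L[ℝ] F}
    (hf : ∀ x, HasFDerivAt f L x) (x : E) : f x = f 0 + L x := by
  have hg : ∀ x, HasFDerivAt (fun y => f 0 + L y) L x := fun x =>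
    L.hasFDerivAt.const_add (f 0)
  refine congrFun (eq_of_fderiv_eq (fun x => (hf x).differentiableAt)
    (fun x => (hg x).differentiableAt) (fun x => (hf x).fderiv.trans (hg x).fderiv.symm) 0 ?_) x
  simp

section Fibred

variable {E F G H : Type*} [NormedAddCommGroup E] [NormedSpace ℝ E] [NormedAddCommGroup F]
  [NormedSpace ℝ F] [NormedAddCommGroup G] [NormedSpace ℝ G] [NormedAddCommGroup H]
  [NormedSpace ℝ H] {A : E × F → G} {B : F → H}

theorem Differentiable.fibred_components (h : Differentiable ℝ fun p : E × F => (A p, B p.2)) :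
    Differentiable ℝ A ∧ Differentiable ℝ B :=
  ⟨h.fst, h.snd.comp ((differentiable_const (0 : E)).prodMk differentiable_id)⟩

theorem hasFDerivAt_fibred {p : E × F} (hA : DifferentiableAt ℝ A p)
    (hB : DifferentiableAt ℝ B p.2) :
    HasFDerivAt (fun q : E × F => (A q, B q.2))
      ((fderiv ℝ A p).prod ((fderiv ℝ B p.2).comp (snd ℝ E F))) p :=
  hA.hasFDerivAt.prodMk (hB.hasFDerivAt.comp p hasFDerivAt_snd)

end Fibred

noncomputable def dotProductCLM {ι : Type*} [Fintype ι] (c : ι → ℝ) : (ι → ℝ) →L[ℝ] ℝ :=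
  LinearMap.toContinuousLinearMap ((dotProductBilin ℝ ℝ).flip c)

@[simp]
theorem dotProductCLM_apply {ι : Type*} [Fintype ι] (c v : ι → ℝ) :
    dotProductCLM c v = v ⬝ᵥ c :=
  rfl

section Symplectic

variable {m : ℕ} {A : (Fin m → ℝ) × (Fin m → ℝ) → (Fin m → ℝ)} {B : (Fin m → ℝ) → (Fin m → ℝ)}

theorem fderiv_fiber_dotProduct_fderiv_base {p : (Fin m → ℝ) × (Fin m → ℝ)}
    (hA : DifferentiableAt ℝ A p) (hB : DifferentiableAt ℝ B p.2)
    (hsymp : ∀ u v : (Fin m → ℝ) × (Fin m → ℝ),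
      symp m (fderiv ℝ (fun q => (A q, B q.2)) p u) (fderiv ℝ (fun q => (A q, B q.2)) p v) =
        symp m u v)
    (κ w : Fin m → ℝ) : fderiv ℝ A p (κ, 0) ⬝ᵥ fderiv ℝ B p.2 w = κ ⬝ᵥ w := by
  have h := hsymp (κ, 0) (0, w)
  rw [(hasFDerivAt_fibred hA hB).fderiv] at h
  simpa [symp, dotProduct] using h

theorem hasFDerivAt_fiber_dotProduct_fderiv_base (hA : Differentiable ℝ A)
    (hB : Differentiable ℝ B)
    (hsymp : ∀ p u v : (Fin m → ℝ) × (Fin m → ℝ),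
      symp m (fderiv ℝ (fun q => (A q, B q.2)) p u) (fderiv ℝ (fun q => (A q, B q.2)) p v) =
        symp m u v)
    (lam w κ : Fin m → ℝ) :
    HasFDerivAt (fun x => A (x, lam) ⬝ᵥ fderiv ℝ B lam w) (dotProductCLM w) κ := by
  have h := (dotProductCLM (fderiv ℝ B lam w)).hasFDerivAt.comp κ
    ((hA (κ, lam)).hasFDerivAt.comp κ (hasFDerivAt_prodMk_left κ lam))
  refine h.congr_fderiv (ContinuousLinearMap.ext fun κ' => ?_)
  simp only [coe_comp, Function.comp_apply, inl_apply, dotProductCLM_apply]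
  exact fderiv_fiber_dotProduct_fderiv_base (p := (κ, lam)) (hA _) (hB _) (hsymp _) κ' w

end Symplectic

theorem stmt11_general (m : ℕ)
    (A : (Fin m → ℝ) × (Fin m → ℝ) → (Fin m → ℝ)) (B : (Fin m → ℝ) → (Fin m → ℝ))
    (hC2 : ContDiff ℝ 2 (fun p : (Fin m → ℝ) × (Fin m → ℝ) => (A p, B p.2)))
    (hsymp : ∀ (p : (Fin m → ℝ) × (Fin m → ℝ)) (u v : (Fin m → ℝ) × (Fin m → ℝ)),
      symp m
        (fderiv ℝ (fun q : (Fin m → ℝ) × (Fin m → ℝ) => (A q, B q.2)) p u)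
        (fderiv ℝ (fun q : (Fin m → ℝ) × (Fin m → ℝ) => (A q, B q.2)) p v) =
      symp m u v)
    (hodd : ∀ (κ lam : Fin m → ℝ), A (-κ, lam) = -A (κ, lam)) :
    ∀ (κ lam w : Fin m → ℝ),
      ∑ i, A (κ, lam) i * (fderiv ℝ B lam w) i = ∑ i, κ i * w i := by
  intro κ lam w
  obtain ⟨hA, hB⟩ := (hC2.differentiable two_ne_zero).fibred_components
  have hzero : A (0, lam) = 0 := self_eq_neg.mp (by simpa using hodd 0 lam)
  have h := eq_add_of_forall_hasFDerivAt
    (hasFDerivAt_fiber_dotProduct_fderiv_base hA hB hsymp lam w) κ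
  simp only [hzero, zero_dotProduct, zero_add, dotProductCLM_apply] at h
  exact h

theorem stmt11 (m : ℕ) (hm : 1 ≤ m)
    (A : (Fin m → ℝ) × (Fin m → ℝ) → (Fin m → ℝ)) (B : (Fin m → ℝ) → (Fin m → ℝ))
    (hC2 : ContDiff ℝ 2 (fun p : (Fin m → ℝ) × (Fin m → ℝ) => (A p, B p.2)))
    (hsymp : ∀ (p : (Fin m → ℝ) × (Fin m → ℝ)) (u v : (Fin m → ℝ) × (Fin m → ℝ)),
      symp m
        (fderiv ℝ (fun q : (Fin m → ℝ) × (Fin m → ℝ) => (A q, B q.2)) p u)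
        (fderiv ℝ (fun q : (Fin m → ℝ) × (Fin m → ℝ) => (A q, B q.2)) p v) =
      symp m u v)
    (hodd : ∀ (κ lam : Fin m → ℝ), A (-κ, lam) = -A (κ, lam)) :
    ∀ (κ lam w : Fin m → ℝ),
      ∑ i, A (κ, lam) i * (fderiv ℝ B lam w) i = ∑ i, κ i * w i :=
  stmt11_general m A B hC2 hsymp hodd
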